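/- Let Γ be a finite connected self 2-distance graph with at least two vertices whose triangles are pairwise vertex-disjoint, and which is not isomorphic to the cycle graph Cₙ for any odd n ≥ 5. If Γ contains C₅|C₃ as a subgraph (i.e., there are six distinct vertices carrying all seven required adjacencies), then Γ is isomorphic to C₅|C₃. -/

import Mathlib

open SimpleGraph

/-- The 2-distance graph of a graph `G`: two distinct vertices are adjacent
iff their distance in `G` equals `2`. -/
def twoDistGraph {V : Type*} (G : SimpleGraph V) : SimpleGraph V where
  Adj u v := G.dist u v = 2
  symm := by
    constructor
    intro u v h
    show G.dist v u = 2
    rwa [SimpleGraph.dist_comm]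
  loopless := by
    constructor
    intro v h
    show False
    simp [SimpleGraph.dist_self] at h

/-- `G` has an `n`-cycle subgraph: `n` distinct vertices `v 0, …, v (n-1)` with
`v i` adjacent to `v (i+1 mod n)` for all `i`. -/
def HasNCycle {V : Type*} (G : SimpleGraph V) (n : ℕ) : Prop :=
  ∃ v : ZMod n → V, Function.Injective v ∧ ∀ i, G.Adj (v i) (v (i + 1))

/-- The edged product `C₅|C₃`: a pentagon and a triangle glued along an edge. -/
def C5C3 : SimpleGraph (Fin 6) :=
  SimpleGraph.fromEdgeSet {s(0,1), s(1,2), s(2,3), s(3,4), s(4,5), s(5,0), s(1,5)}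


/-!
Label the copy of `C₅|C₃` as the 6-cycle `c0 … c5` with chord `c1 c5`. As `Γ ≅ Γ₂`, the
graphs `Γ₂` and `(Γ₂)₂` also have pairwise disjoint triangles. Where `c2 c4` is not an edge,
`Γ₂` contains the copy `c0 c2 c5 c3 c1 c4`; where it is, `c2 c3 c4` is a second triangle and
the copy can be relabelled around it. Playing triangles of `Γ`, `Γ₂` and `(Γ₂)₂` against
each other then shows that no `cᵢ` has a neighbour outside the copy and that the only
possible further edges are `c0 c3` and `c2 c4`. By connectivity `Γ` lives on the six
vertices, and of the four candidate graphs only `C₅|C₃` has as many edges as its 2-distance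
graph.
-/

open Finset

section

variable {V W : Type*} {G : SimpleGraph V} {G' : SimpleGraph W} {u v w : V}

lemma twoDistGraph_adj :
    (twoDistGraph G).Adj u v ↔ u ≠ v ∧ ¬G.Adj u v ∧ ∃ w, G.Adj u w ∧ G.Adj w v := by
  change G.dist u v = 2 ↔ _
  rw [SimpleGraph.dist, ENat.toNat_eq_iff two_ne_zero]
  simp [edist_eq_two_iff, Set.Nonempty, mem_commonNeighbors, adj_comm]

lemma twoDistGraph_adj_of_adj_of_adj (hne : u ≠ v) (hn : ¬G.Adj u v) (hw : G.Adj u w)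
    (hw' : G.Adj w v) : (twoDistGraph G).Adj u v :=
  twoDistGraph_adj.mpr ⟨hne, hn, w, hw, hw'⟩

lemma not_twoDistGraph_adj_of_forall (h : ∀ w, G.Adj w v → ¬G.Adj u w) :
    ¬(twoDistGraph G).Adj u v := fun huv =>
  let ⟨_, _, w, huw, hwv⟩ := twoDistGraph_adj.mp huv
  h w hwv huw

lemma SimpleGraph.Adj.not_twoDistGraph_adj (h : G.Adj u v) : ¬(twoDistGraph G).Adj u v :=
  fun h₂ => (twoDistGraph_adj.mp h₂).2.1 h

lemma SimpleGraph.Adj.twoDistGraph_twoDistGraph_adj (h : G.Adj u v)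
    (hw : (twoDistGraph G).Adj u w) (hw' : (twoDistGraph G).Adj w v) :
    (twoDistGraph (twoDistGraph G)).Adj u v :=
  twoDistGraph_adj_of_adj_of_adj h.ne h.not_twoDistGraph_adj hw hw'

instance [Fintype V] [DecidableEq V] [DecidableRel G.Adj] : DecidableRel (twoDistGraph G).Adj :=
  fun _ _ => decidable_of_iff' _ twoDistGraph_adj

def SimpleGraph.Iso.twoDistGraph (e : G ≃g G') : twoDistGraph G ≃g twoDistGraph G' where
  toEquiv := e.toEquiv
  map_rel_iff' := by
    intro u v
    simp [twoDistGraph_adj, e.map_adj_iff, e.surjective.exists]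

lemma SimpleGraph.Reachable.mem_of_adj_closed {s : Set V} (h : G.Reachable u v)
    (hs : ∀ x y, G.Adj x y → x ∈ s → y ∈ s) (hu : u ∈ s) : v ∈ s := by
  obtain ⟨p⟩ := h
  induction p with
  | nil => exact hu
  | cons hxy _ ih => exact ih (hs _ _ hxy hu)

def TrianglesDisjoint (G : SimpleGraph V) : Prop :=
  ∀ s t : Finset V, G.IsNClique 3 s → G.IsNClique 3 t → s ≠ t → Disjoint s t

lemma TrianglesDisjoint.of_iso (e : G ≃g G') (hT : TrianglesDisjoint G') :
    TrianglesDisjoint G := by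
  intro s t hs ht hst
  have hle : G.map e.toEmbedding ≤ G' :=
    (map_le_iff_le_comap _ _ _).mpr fun _ _ h => e.map_adj_iff.mpr h
  have := hT _ _ (hs.map.mono hle) (ht.map.mono hle) ((Finset.map_injective _).ne hst)
  rwa [disjoint_map] at this

lemma TrianglesDisjoint.false_of_triangles_meet (hT : TrianglesDisjoint G) {a b c d e : V}
    (hab : G.Adj a b) (hac : G.Adj a c) (hbc : G.Adj b c)
    (had : G.Adj a d) (hae : G.Adj a e) (hde : G.Adj d e) (hdb : d ≠ b) (hdc : d ≠ c) :
    False := by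
  classical
  have habc : G.IsNClique 3 {a, b, c} := is3Clique_triple_iff.mpr ⟨hab, hac, hbc⟩
  have hade : G.IsNClique 3 {a, d, e} := is3Clique_triple_iff.mpr ⟨had, hae, hde⟩
  have hne : ({a, b, c} : Finset V) ≠ {a, d, e} := fun h => by
    have hd : d ∈ ({a, b, c} : Finset V) := h ▸ by simp
    simp only [mem_insert, mem_singleton] at hd
    exact hd.elim had.ne' (Or.elim · hdb hdc)
  exact disjoint_left.mp (hT _ _ habc hade hne) (mem_insert_self a _)
    (mem_insert_self a _)

instance : DecidableRel C5C3.Adj := by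
  unfold C5C3
  infer_instance

def c5c3WithChords (a b : Bool) : SimpleGraph (Fin 6) :=
  C5C3 ⊔ SimpleGraph.fromRel fun i j => (a ∧ i = 0 ∧ j = 3) ∨ (b ∧ i = 2 ∧ j = 4)

instance (a b : Bool) : DecidableRel (c5c3WithChords a b).Adj := by
  unfold c5c3WithChords
  infer_instance

lemma c5c3WithChords_false_false : c5c3WithChords false false = C5C3 := by
  ext
  simp [c5c3WithChords]

lemma exists_eq_c5c3WithChords {H : SimpleGraph (Fin 6)} (h₁ : C5C3 ≤ H)
    (h₂ : H ≤ c5c3WithChords true true) : ∃ a b, H = c5c3WithChords a b := by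
  classical
  refine ⟨decide (H.Adj 0 3), decide (H.Adj 2 4), ?_⟩
  ext i j
  have h₁ij := @h₁ i j
  have h₂ij := @h₂ i j
  fin_cases i <;> fin_cases j <;> simp_all +decide [c5c3WithChords, H.adj_comm]

/-- Adding the chord `{0,3}`, `{2,4}` or both gives 8, 8 or 9 edges, but the
2-distance graph then has 7, 6 or 6 edges. -/
lemma eq_false_of_card_edgeFinset_twoDistGraph (a b : Bool)
    (h : #(twoDistGraph (c5c3WithChords a b)).edgeFinset = #(c5c3WithChords a b).edgeFinset) :
    a = false ∧ b = false := by
  revert a b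
  decide

lemma eq_C5C3_of_le_of_le {H : SimpleGraph (Fin 6)} (h₁ : C5C3 ≤ H)
    (h₂ : H ≤ c5c3WithChords true true) (hH : Nonempty (twoDistGraph H ≃g H)) : H = C5C3 := by
  obtain ⟨a, b, rfl⟩ := exists_eq_c5c3WithChords h₁ h₂
  obtain ⟨rfl, rfl⟩ := eq_false_of_card_edgeFinset_twoDistGraph a b hH.some.card_edgeFinset_eq
  exact c5c3WithChords_false_false

structure C5C3Copy (G : SimpleGraph V) (c0 c1 c2 c3 c4 c5 : V) : Prop where
  a01 : G.Adj c0 c1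
  a12 : G.Adj c1 c2
  a23 : G.Adj c2 c3
  a34 : G.Adj c3 c4
  a45 : G.Adj c4 c5
  a50 : G.Adj c5 c0
  a15 : G.Adj c1 c5
  d02 : c0 ≠ c2
  d03 : c0 ≠ c3
  d04 : c0 ≠ c4
  d13 : c1 ≠ c3
  d14 : c1 ≠ c4
  d24 : c2 ≠ c4
  d25 : c2 ≠ c5
  d35 : c3 ≠ c5

namespace C5C3Copy

variable {c0 c1 c2 c3 c4 c5 : V}

lemma of_injective {f : Fin 6 → V} (hf : Function.Injective f)
    (hadj : ∀ i j, C5C3.Adj i j → G.Adj (f i) (f j)) :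
    C5C3Copy G (f 0) (f 1) (f 2) (f 3) (f 4) (f 5) :=
  ⟨hadj 0 1 (by decide), hadj 1 2 (by decide), hadj 2 3 (by decide), hadj 3 4 (by decide),
    hadj 4 5 (by decide), hadj 5 0 (by decide), hadj 1 5 (by decide),
    hf.ne (by decide), hf.ne (by decide), hf.ne (by decide), hf.ne (by decide),
    hf.ne (by decide), hf.ne (by decide), hf.ne (by decide), hf.ne (by decide)⟩

lemma reverse (hC : C5C3Copy G c0 c1 c2 c3 c4 c5) : C5C3Copy G c0 c5 c4 c3 c2 c1 :=
  ⟨hC.a50.symm, hC.a45.symm, hC.a34.symm, hC.a23.symm, hC.a12.symm, hC.a01.symm, hC.a15.symm,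
    hC.d04, hC.d03, hC.d02, hC.d35.symm, hC.d25.symm, hC.d24.symm, hC.d14.symm, hC.d13.symm⟩

lemma swap (hC : C5C3Copy G c0 c1 c2 c3 c4 c5) (h24 : G.Adj c2 c4) :
    C5C3Copy G c3 c2 c1 c0 c5 c4 :=
  ⟨hC.a23.symm, hC.a12.symm, hC.a01.symm, hC.a50.symm, hC.a45.symm, hC.a34.symm, h24,
    hC.d13.symm, hC.d03.symm, hC.d35, hC.d02.symm, hC.d25, hC.a15.ne, hC.d14, hC.d04⟩

lemma not_adj_02 (hC : C5C3Copy G c0 c1 c2 c3 c4 c5) (hT : TrianglesDisjoint G) :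
    ¬G.Adj c0 c2 := fun h =>
  hT.false_of_triangles_meet hC.a01 h hC.a12 hC.a50.symm hC.a01 hC.a15.symm hC.a15.ne' hC.d25.symm

lemma not_adj_04 (hC : C5C3Copy G c0 c1 c2 c3 c4 c5) (hT : TrianglesDisjoint G) :
    ¬G.Adj c0 c4 :=
  hC.reverse.not_adj_02 hT

lemma not_adj_14 (hC : C5C3Copy G c0 c1 c2 c3 c4 c5) (hT : TrianglesDisjoint G) :
    ¬G.Adj c1 c4 := fun h =>
  hT.false_of_triangles_meet hC.a01.symm hC.a15 hC.a50.symm h hC.a15 hC.a45 hC.d04.symm hC.a45.ne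

lemma not_adj_25 (hC : C5C3Copy G c0 c1 c2 c3 c4 c5) (hT : TrianglesDisjoint G) :
    ¬G.Adj c2 c5 := fun h =>
  (hC.reverse.not_adj_14 hT) h.symm

lemma not_adj_13 (hC : C5C3Copy G c0 c1 c2 c3 c4 c5) (hT : TrianglesDisjoint G) :
    ¬G.Adj c1 c3 := fun h =>
  hT.false_of_triangles_meet hC.a01.symm hC.a15 hC.a50.symm hC.a12 h hC.a23 hC.d02.symm hC.d25

lemma not_adj_35 (hC : C5C3Copy G c0 c1 c2 c3 c4 c5) (hT : TrianglesDisjoint G) :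
    ¬G.Adj c3 c5 := fun h =>
  (hC.reverse.not_adj_13 hT) h.symm

lemma twoDistGraph_adj_02 (hC : C5C3Copy G c0 c1 c2 c3 c4 c5) (hT : TrianglesDisjoint G) :
    (twoDistGraph G).Adj c0 c2 :=
  twoDistGraph_adj_of_adj_of_adj hC.d02 (hC.not_adj_02 hT) hC.a01 hC.a12

lemma twoDistGraph_adj_04 (hC : C5C3Copy G c0 c1 c2 c3 c4 c5) (hT : TrianglesDisjoint G) :
    (twoDistGraph G).Adj c0 c4 :=
  hC.reverse.twoDistGraph_adj_02 hT

lemma twoDistGraph_adj_13 (hC : C5C3Copy G c0 c1 c2 c3 c4 c5) (hT : TrianglesDisjoint G) :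
    (twoDistGraph G).Adj c1 c3 :=
  twoDistGraph_adj_of_adj_of_adj hC.d13 (hC.not_adj_13 hT) hC.a12 hC.a23

lemma twoDistGraph_adj_35 (hC : C5C3Copy G c0 c1 c2 c3 c4 c5) (hT : TrianglesDisjoint G) :
    (twoDistGraph G).Adj c3 c5 :=
  (hC.reverse.twoDistGraph_adj_13 hT).symm

lemma twoDistGraph_adj_14 (hC : C5C3Copy G c0 c1 c2 c3 c4 c5) (hT : TrianglesDisjoint G) :
    (twoDistGraph G).Adj c1 c4 :=
  twoDistGraph_adj_of_adj_of_adj hC.d14 (hC.not_adj_14 hT) hC.a15 hC.a45.symm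

lemma twoDistGraph_adj_25 (hC : C5C3Copy G c0 c1 c2 c3 c4 c5) (hT : TrianglesDisjoint G) :
    (twoDistGraph G).Adj c2 c5 :=
  (hC.reverse.twoDistGraph_adj_14 hT).symm

lemma twoDistGraph_adj_24 (hC : C5C3Copy G c0 c1 c2 c3 c4 c5) (h24 : ¬G.Adj c2 c4) :
    (twoDistGraph G).Adj c2 c4 :=
  twoDistGraph_adj_of_adj_of_adj hC.d24 h24 hC.a23 hC.a34

lemma toTwoDistGraph (hC : C5C3Copy G c0 c1 c2 c3 c4 c5) (hT : TrianglesDisjoint G)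
    (h24 : ¬G.Adj c2 c4) : C5C3Copy (twoDistGraph G) c0 c2 c5 c3 c1 c4 :=
  ⟨hC.twoDistGraph_adj_02 hT, hC.twoDistGraph_adj_25 hT, (hC.twoDistGraph_adj_35 hT).symm,
    (hC.twoDistGraph_adj_13 hT).symm, hC.twoDistGraph_adj_14 hT,
    (hC.twoDistGraph_adj_04 hT).symm, hC.twoDistGraph_adj_24 h24,
    hC.a50.ne', hC.d03, hC.a01.ne, hC.a23.ne, hC.a12.ne', hC.a15.ne', hC.a45.ne', hC.a34.ne⟩

lemma eq_c3_of_adj_c2_of_adj_c4 (hC : C5C3Copy G c0 c1 c2 c3 c4 c5) (hT : TrianglesDisjoint G)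
    (hT₂ : TrianglesDisjoint (twoDistGraph G)) {y : V} (h2 : G.Adj y c2) (h4 : G.Adj y c4) :
    y = c3 := by
  by_contra hy3
  by_cases h24 : G.Adj c2 c4
  · exact hT.false_of_triangles_meet h2.symm h24 h4 hC.a23 h24 hC.a34 (Ne.symm hy3) hC.a34.ne
  have hy0 : y ≠ c0 := fun h => hC.not_adj_02 hT (h ▸ h2)
  have hy1 : y ≠ c1 := fun h => hC.not_adj_14 hT (h ▸ h4)
  have hy5 : y ≠ c5 := fun h => hC.not_adj_25 hT (h ▸ h2).symm
  have hn3 : ¬G.Adj y c3 := fun h3 =>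
    hT.false_of_triangles_meet h2 h3 hC.a23 h4 h3 hC.a34.symm hC.d24.symm hC.a34.ne'
  have hn1 : ¬G.Adj y c1 := fun h1 =>
    hT.false_of_triangles_meet h1.symm hC.a12 h2 hC.a01.symm hC.a15 hC.a50.symm hy0.symm hC.d02
  have hn5 : ¬G.Adj y c5 := fun h5 =>
    hT.false_of_triangles_meet h5.symm hC.a45.symm h4 hC.a50 hC.a15.symm hC.a01 hy0.symm hC.d04
  have D1 := twoDistGraph_adj_of_adj_of_adj hy1 hn1 h2 hC.a12.symm
  have D5 := twoDistGraph_adj_of_adj_of_adj hy5 hn5 h4 hC.a45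
  have D3 := twoDistGraph_adj_of_adj_of_adj hy3 hn3 h2 hC.a23
  exact hT₂.false_of_triangles_meet D1 D3 (hC.twoDistGraph_adj_13 hT) D5 D3
    (hC.twoDistGraph_adj_35 hT).symm hC.a15.ne' hC.d35.symm

lemma eq_of_adj_c1 (hC : C5C3Copy G c0 c1 c2 c3 c4 c5) (hT : TrianglesDisjoint G)
    (hT₂ : TrianglesDisjoint (twoDistGraph G)) {x : V} (h1 : G.Adj x c1) :
    x = c0 ∨ x = c2 ∨ x = c5 := by
  by_contra! hx
  obtain ⟨hx0, hx2, hx5⟩ := hx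
  have hn0 : ¬G.Adj x c0 := fun h0 =>
    hT.false_of_triangles_meet h0.symm hC.a01 h1 hC.a50.symm hC.a01 hC.a15.symm hx5.symm hC.a15.ne'
  have hn2 : ¬G.Adj x c2 := fun h2 =>
    hT.false_of_triangles_meet h1.symm hC.a12 h2 hC.a01.symm hC.a15 hC.a50.symm hx0.symm hC.d02
  have hn5 : ¬G.Adj x c5 := fun h5 =>
    hT.false_of_triangles_meet h1.symm hC.a15 h5 hC.a01.symm hC.a15 hC.a50.symm hx0.symm hC.a50.ne'
  have D0 := twoDistGraph_adj_of_adj_of_adj hx0 hn0 h1 hC.a01.symm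
  have D2 := twoDistGraph_adj_of_adj_of_adj hx2 hn2 h1 hC.a12
  have D5 := twoDistGraph_adj_of_adj_of_adj hx5 hn5 h1 hC.a15
  exact hT₂.false_of_triangles_meet D0 D2 (hC.twoDistGraph_adj_02 hT) D5 D2
    (hC.twoDistGraph_adj_25 hT).symm hC.a50.ne hC.d25.symm

lemma eq_of_adj_c5 (hC : C5C3Copy G c0 c1 c2 c3 c4 c5) (hT : TrianglesDisjoint G)
    (hT₂ : TrianglesDisjoint (twoDistGraph G)) {x : V} (h5 : G.Adj x c5) :
    x = c0 ∨ x = c4 ∨ x = c1 :=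
  hC.reverse.eq_of_adj_c1 hT hT₂ h5

lemma eq_of_adj_c3_of_not_adj_c2_c4 (hC : C5C3Copy G c0 c1 c2 c3 c4 c5)
    (hT : TrianglesDisjoint G) (hT₂ : TrianglesDisjoint (twoDistGraph G)) (h24 : ¬G.Adj c2 c4)
    {x : V} (h3 : G.Adj x c3) : x = c2 ∨ x = c4 ∨ x = c0 := by
  by_contra! hx
  obtain ⟨hx2, hx4, hx0⟩ := hx
  have hx1 : x ≠ c1 := fun h => hC.not_adj_13 hT (h ▸ h3)
  have hx5 : x ≠ c5 := fun h => hC.not_adj_35 hT (h ▸ h3).symm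
  have D02 := hC.twoDistGraph_adj_02 hT
  have D04 := hC.twoDistGraph_adj_04 hT
  have D24 := hC.twoDistGraph_adj_24 h24
  by_cases a2 : G.Adj x c2 <;> by_cases a4 : G.Adj x c4
  · exact h3.ne (hC.eq_c3_of_adj_c2_of_adj_c4 hT hT₂ a2 a4)
  · have hn1 : ¬G.Adj x c1 := fun h1 =>
      hT.false_of_triangles_meet h1.symm hC.a12 a2 hC.a01.symm hC.a15 hC.a50.symm hx0.symm hC.d02
    have D1 := twoDistGraph_adj_of_adj_of_adj hx1 hn1 a2 hC.a12.symm
    have D4 := twoDistGraph_adj_of_adj_of_adj hx4 a4 h3 hC.a34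
    exact hT₂.false_of_triangles_meet D4.symm (hC.twoDistGraph_adj_14 hT).symm D1 D04.symm
      D24.symm D02 hx0.symm hC.a01.ne
  · have hn5 : ¬G.Adj x c5 := fun h5 =>
      hT.false_of_triangles_meet h5.symm hC.a45.symm a4 hC.a50 hC.a15.symm hC.a01 hx0.symm hC.d04
    have D5 := twoDistGraph_adj_of_adj_of_adj hx5 hn5 a4 hC.a45
    have D2 := twoDistGraph_adj_of_adj_of_adj hx2 a2 h3 hC.a23.symm
    exact hT₂.false_of_triangles_meet D2.symm (hC.twoDistGraph_adj_25 hT) D5 D02.symm D24 D04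
      hx0.symm hC.a50.ne'
  · have D2 := twoDistGraph_adj_of_adj_of_adj hx2 a2 h3 hC.a23.symm
    have D4 := twoDistGraph_adj_of_adj_of_adj hx4 a4 h3 hC.a34
    exact hT₂.false_of_triangles_meet D2.symm D24 D4 D02.symm D24 D04 hx0.symm hC.d04

lemma eq_of_adj_c0_of_not_adj_c2_c4 (hC : C5C3Copy G c0 c1 c2 c3 c4 c5)
    (hT : TrianglesDisjoint G) (hT₂ : TrianglesDisjoint (twoDistGraph G))
    (hT₄ : TrianglesDisjoint (twoDistGraph (twoDistGraph G))) (h24 : ¬G.Adj c2 c4)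
    {x : V} (h0 : G.Adj x c0) : x = c1 ∨ x = c5 ∨ x = c3 := by
  by_contra! hx
  obtain ⟨hx1, hx5, hx3⟩ := hx
  have hn1 : ¬G.Adj x c1 := fun h1 =>
    hT.false_of_triangles_meet h0.symm hC.a01 h1 hC.a50.symm hC.a01 hC.a15.symm hx5.symm hC.a15.ne'
  have hn5 : ¬G.Adj x c5 := fun h5 =>
    hT.false_of_triangles_meet h0.symm hC.a50.symm h5 hC.a01 hC.a50.symm hC.a15 hx1.symm hC.a15.ne
  have D1 := twoDistGraph_adj_of_adj_of_adj hx1 hn1 h0 hC.a01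
  have D5 := twoDistGraph_adj_of_adj_of_adj hx5 hn5 h0 hC.a50.symm
  exact hx3 ((hC.toTwoDistGraph hT h24).eq_c3_of_adj_c2_of_adj_c4 hT₂ hT₄ D5 D1)

lemma eq_of_adj_c2_of_not_adj_c2_c4 (hC : C5C3Copy G c0 c1 c2 c3 c4 c5)
    (hT : TrianglesDisjoint G) (hT₂ : TrianglesDisjoint (twoDistGraph G))
    (hT₄ : TrianglesDisjoint (twoDistGraph (twoDistGraph G))) (h24 : ¬G.Adj c2 c4)
    {x : V} (h2 : G.Adj x c2) : x = c1 ∨ x = c3 := by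
  by_contra! hx
  obtain ⟨hx1, hx3⟩ := hx
  have hx0 : x ≠ c0 := fun h => hC.not_adj_02 hT (h ▸ h2)
  have hx4 : x ≠ c4 := fun h => h24 (h ▸ h2).symm
  have hx5 : x ≠ c5 := fun h => hC.not_adj_25 hT (h ▸ h2).symm
  have hn1 : ¬G.Adj x c1 := fun h1 =>
    hT.false_of_triangles_meet h1.symm hC.a12 h2 hC.a01.symm hC.a15 hC.a50.symm hx0.symm hC.d02
  by_cases a3 : G.Adj x c3
  · have hn4 : ¬G.Adj x c4 := fun h4 =>
      hT.false_of_triangles_meet h2 a3 hC.a23 h4 a3 hC.a34.symm hC.d24.symm hC.a34.ne'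
    have D4 := twoDistGraph_adj_of_adj_of_adj hx4 hn4 a3 hC.a34
    have D1 := twoDistGraph_adj_of_adj_of_adj hx1 hn1 h2 hC.a12.symm
    exact hT₂.false_of_triangles_meet D4.symm (hC.twoDistGraph_adj_14 hT).symm D1
      (hC.twoDistGraph_adj_04 hT).symm (hC.twoDistGraph_adj_24 h24).symm
      (hC.twoDistGraph_adj_02 hT) hx0.symm hC.a01.ne
  · have D3 := twoDistGraph_adj_of_adj_of_adj hx3 a3 h2 hC.a23
    obtain h | h | h := (hC.toTwoDistGraph hT h24).eq_of_adj_c3_of_not_adj_c2_c4 hT₂ hT₄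
      hC.a15.symm.not_twoDistGraph_adj D3
    exacts [hx5 h, hx1 h, hx0 h]

lemma triangle_twoDistGraph_twoDistGraph (hC : C5C3Copy G c0 c1 c2 c3 c4 c5)
    (hT : TrianglesDisjoint G) (h24 : G.Adj c2 c4) :
    (twoDistGraph (twoDistGraph G)).Adj c2 c3 ∧ (twoDistGraph (twoDistGraph G)).Adj c2 c4 ∧
      (twoDistGraph (twoDistGraph G)).Adj c3 c4 :=
  ⟨hC.a23.twoDistGraph_twoDistGraph_adj (hC.twoDistGraph_adj_25 hT)
      (hC.twoDistGraph_adj_35 hT).symm,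
    h24.twoDistGraph_twoDistGraph_adj (hC.twoDistGraph_adj_02 hT).symm
      (hC.twoDistGraph_adj_04 hT),
    hC.a34.twoDistGraph_twoDistGraph_adj (hC.twoDistGraph_adj_13 hT).symm
      (hC.twoDistGraph_adj_14 hT)⟩

lemma eq_of_adj_c0_of_adj_c2_c4 (hC : C5C3Copy G c0 c1 c2 c3 c4 c5)
    (hT : TrianglesDisjoint G) (hT₂ : TrianglesDisjoint (twoDistGraph G))
    (hT₄ : TrianglesDisjoint (twoDistGraph (twoDistGraph G))) (h24 : G.Adj c2 c4)
    {x : V} (h0 : G.Adj x c0) : x = c1 ∨ x = c5 ∨ x = c3 := by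
  by_contra! hx
  obtain ⟨hx1, hx5, hx3⟩ := hx
  have hx2 : x ≠ c2 := fun h => hC.not_adj_02 hT (h ▸ h0).symm
  have hx4 : x ≠ c4 := fun h => hC.not_adj_04 hT (h ▸ h0).symm
  have N2 := fun y => (hC.swap h24).eq_of_adj_c1 hT hT₂ (x := y)
  have N4 := fun y => (hC.swap h24).eq_of_adj_c5 hT hT₂ (x := y)
  have hn1 : ¬G.Adj x c1 := fun h1 =>
    hT.false_of_triangles_meet h0.symm hC.a01 h1 hC.a50.symm hC.a01 hC.a15.symm hx5.symm hC.a15.ne'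
  have hn5 : ¬G.Adj x c5 := fun h5 =>
    hT.false_of_triangles_meet h0.symm hC.a50.symm h5 hC.a01 hC.a50.symm hC.a15 hx1.symm hC.a15.ne
  have D1 := twoDistGraph_adj_of_adj_of_adj hx1 hn1 h0 hC.a01
  have D5 := twoDistGraph_adj_of_adj_of_adj hx5 hn5 h0 hC.a50.symm
  have hn2 : ¬G.Adj x c2 := fun h2 => by
    obtain h | h | h := N2 x h2
    exacts [hx3 h, hx1 h, hx4 h]
  have hn4 : ¬G.Adj x c4 := fun h4 => by
    obtain h | h | h := N4 x h4
    exacts [hx3 h, hx5 h, hx2 h]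
  have hn3 : ¬G.Adj x c3 := fun h3 =>
    hT₂.false_of_triangles_meet D1 (twoDistGraph_adj_of_adj_of_adj hx4 hn4 h3 hC.a34)
      (hC.twoDistGraph_adj_14 hT) D5 (twoDistGraph_adj_of_adj_of_adj hx2 hn2 h3 hC.a23.symm)
      (hC.twoDistGraph_adj_25 hT).symm hC.a15.ne' hC.a45.ne'
  have nD2 : ¬(twoDistGraph G).Adj x c2 := not_twoDistGraph_adj_of_forall fun w hw => by
    obtain rfl | rfl | rfl := N2 w hw
    exacts [hn3, hn1, hn4]
  have nD4 : ¬(twoDistGraph G).Adj x c4 := not_twoDistGraph_adj_of_forall fun w hw => by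
    obtain rfl | rfl | rfl := N4 w hw
    exacts [hn3, hn5, hn2]
  obtain ⟨E23, E24, E34⟩ := hC.triangle_twoDistGraph_twoDistGraph hT h24
  have E2 := twoDistGraph_adj_of_adj_of_adj hx2 nD2 D5 (hC.twoDistGraph_adj_25 hT).symm
  have E4 := twoDistGraph_adj_of_adj_of_adj hx4 nD4 D1 (hC.twoDistGraph_adj_14 hT)
  exact hT₄.false_of_triangles_meet E2.symm E24 E4 E23 E24 E34 hx3.symm hC.a34.ne

lemma eq_of_adj_c0 (hC : C5C3Copy G c0 c1 c2 c3 c4 c5) (hT : TrianglesDisjoint G)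
    (hT₂ : TrianglesDisjoint (twoDistGraph G))
    (hT₄ : TrianglesDisjoint (twoDistGraph (twoDistGraph G))) {x : V} (h0 : G.Adj x c0) :
    x = c1 ∨ x = c5 ∨ x = c3 := by
  by_cases h24 : G.Adj c2 c4
  · exact hC.eq_of_adj_c0_of_adj_c2_c4 hT hT₂ hT₄ h24 h0
  · exact hC.eq_of_adj_c0_of_not_adj_c2_c4 hT hT₂ hT₄ h24 h0

lemma eq_of_adj_c2 (hC : C5C3Copy G c0 c1 c2 c3 c4 c5) (hT : TrianglesDisjoint G)
    (hT₂ : TrianglesDisjoint (twoDistGraph G))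
    (hT₄ : TrianglesDisjoint (twoDistGraph (twoDistGraph G))) {x : V} (h2 : G.Adj x c2) :
    x = c1 ∨ x = c3 ∨ x = c4 := by
  by_cases h24 : G.Adj c2 c4
  · obtain h | h | h := (hC.swap h24).eq_of_adj_c1 hT hT₂ h2
    exacts [.inr (.inl h), .inl h, .inr (.inr h)]
  · exact (hC.eq_of_adj_c2_of_not_adj_c2_c4 hT hT₂ hT₄ h24 h2).imp_right .inl

lemma eq_of_adj_c3 (hC : C5C3Copy G c0 c1 c2 c3 c4 c5) (hT : TrianglesDisjoint G)
    (hT₂ : TrianglesDisjoint (twoDistGraph G))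
    (hT₄ : TrianglesDisjoint (twoDistGraph (twoDistGraph G))) {x : V} (h3 : G.Adj x c3) :
    x = c2 ∨ x = c4 ∨ x = c0 := by
  by_cases h24 : G.Adj c2 c4
  · exact (hC.swap h24).eq_of_adj_c0_of_adj_c2_c4 hT hT₂ hT₄ hC.a15 h3
  · exact hC.eq_of_adj_c3_of_not_adj_c2_c4 hT hT₂ h24 h3

lemma exists_eq_of_adj {f : Fin 6 → V} (hC : C5C3Copy G (f 0) (f 1) (f 2) (f 3) (f 4) (f 5))
    (hT : TrianglesDisjoint G) (hT₂ : TrianglesDisjoint (twoDistGraph G))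
    (hT₄ : TrianglesDisjoint (twoDistGraph (twoDistGraph G))) (i : Fin 6) {x : V}
    (h : G.Adj (f i) x) : ∃ j, x = f j ∧ (c5c3WithChords true true).Adj i j := by
  fin_cases i
  · obtain rfl | rfl | rfl := hC.eq_of_adj_c0 hT hT₂ hT₄ h.symm <;>
      exact ⟨_, rfl, by decide⟩
  · obtain rfl | rfl | rfl := hC.eq_of_adj_c1 hT hT₂ h.symm <;>
      exact ⟨_, rfl, by decide⟩
  · obtain rfl | rfl | rfl := hC.eq_of_adj_c2 hT hT₂ hT₄ h.symm <;>
      exact ⟨_, rfl, by decide⟩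
  · obtain rfl | rfl | rfl := hC.eq_of_adj_c3 hT hT₂ hT₄ h.symm <;>
      exact ⟨_, rfl, by decide⟩
  · obtain rfl | rfl | rfl := hC.reverse.eq_of_adj_c2 hT hT₂ hT₄ h.symm <;>
      exact ⟨_, rfl, by decide⟩
  · obtain rfl | rfl | rfl := hC.eq_of_adj_c5 hT hT₂ h.symm <;>
      exact ⟨_, rfl, by decide⟩

end C5C3Copy

end

theorem iso_C5C3_of_disjointTriangles_hasC5C3_general {V : Type*}
    (G : SimpleGraph V)
    (hconn : G.Connected)
    (hself : Nonempty (twoDistGraph G ≃g G))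
    (htri : ∀ s t : Finset V, G.IsNClique 3 s → G.IsNClique 3 t → s ≠ t → Disjoint s t)
    (hsub : ∃ f : Fin 6 → V, Function.Injective f ∧
      ∀ i j, C5C3.Adj i j → G.Adj (f i) (f j)) :
    Nonempty (G ≃g C5C3) := by
  obtain ⟨φ⟩ := hself
  obtain ⟨f, hf, hadj⟩ := hsub
  have hT : TrianglesDisjoint G := htri
  have hT₂ := hT.of_iso φ
  have hT₄ := hT₂.of_iso φ.twoDistGraph
  have hnbr := (C5C3Copy.of_injective hf hadj).exists_eq_of_adj hT hT₂ hT₄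
  have hsurj : Function.Surjective f := fun x =>
    (hconn.preconnected (f 0) x).mem_of_adj_closed (s := Set.range f) (by
      rintro _ y hy ⟨i, rfl⟩
      obtain ⟨j, rfl, -⟩ := hnbr i hy
      exact ⟨j, rfl⟩) ⟨0, rfl⟩
  let e := Equiv.ofBijective f ⟨hf, hsurj⟩
  have hH : G.comap e = C5C3 := by
    refine eq_C5C3_of_le_of_le (fun i j h => hadj i j h) (fun i j h => ?_)
      ⟨(Iso.comap e G).twoDistGraph.trans (φ.trans (Iso.comap e G).symm)⟩
    obtain ⟨k, hk, hik⟩ := hnbr i h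
    rwa [hf hk]
  exact ⟨(hH ▸ Iso.comap e G).symm⟩

/-- A connected self 2-distance graph with pairwise vertex-disjoint triangles,
not an odd cycle of length ≥ 5, containing C₅|C₃ as a subgraph, is isomorphic
to C₅|C₃. -/
theorem iso_C5C3_of_disjointTriangles_hasC5C3 {V : Type*} [Fintype V]
    (G : SimpleGraph V)
    (hconn : G.Connected) (hcard : 1 < Fintype.card V)
    (hself : Nonempty (twoDistGraph G ≃g G))
    (htri : ∀ s t : Finset V, G.IsNClique 3 s → G.IsNClique 3 t → s ≠ t → Disjoint s t)
    (hcyc : ∀ n : ℕ, 5 ≤ n → Odd n → IsEmpty (G ≃g cycleGraph n))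
    (hsub : ∃ f : Fin 6 → V, Function.Injective f ∧
      ∀ i j, C5C3.Adj i j → G.Adj (f i) (f j)) :
    Nonempty (G ≃g C5C3) :=
  iso_C5C3_of_disjointTriangles_hasC5C3_general G hconn hself htri hsub
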